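/- For γ > 0, ν > 1, and any nonnegative integer k < ν, if Y follows the two-piece Student t distribution with density p(y|γ,ν) = (2/(γ + 1/γ))[f_ν(y/γ)·1_{[0,∞)}(y) + f_ν(γy)·1_{(−∞,0)}(y)], then E[Y^k] = (2/(γ + 1/γ))·[γ^{k+1} + (−1)^k γ^{−k−1}]·(ν^{k/2}/(2√π))·(Γ((k+1)/2)Γ((ν−k)/2)/Γ(ν/2)). -/

import Mathlib

/-!
Split the integral at `0`. The substitutions `y = γ x` on `[0, ∞)` and `y = -x / γ` on
`(-∞, 0)`, together with the evenness of `f_ν`, turn the two pieces into `γ ^ (k + 1)` and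
`(-1) ^ k γ ^ (-k - 1)` times the half-line moment `∫₀^∞ x ^ k f_ν(x) dx`. After `x = √ν t`
and `t² = u / (1 - u)` that moment is the Euler beta integral `B((k + 1) / 2, (ν - k) / 2)`.
-/

open Real MeasureTheory Filter Topology

/-- Student t density with ν degrees of freedom. -/
noncomputable def tDens (ν x : ℝ) : ℝ :=
  Real.Gamma ((ν + 1) / 2) / (Real.sqrt (Real.pi * ν) * Real.Gamma (ν / 2)) *
    (1 + x ^ 2 / ν) ^ (-((ν + 1) / 2))

/-- Two-piece Student t density with skewness γ and degrees of freedom ν. -/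
noncomputable def tpDens (γ ν ε : ℝ) : ℝ :=
  2 / (γ + 1 / γ) * (if 0 ≤ ε then tDens ν (ε / γ) else tDens ν (γ * ε))

/-- Mean of the two-piece Student t distribution. -/
noncomputable def mMean (γ ν : ℝ) : ℝ :=
  2 * ν * Real.Gamma ((ν + 1) / 2) /
    (Real.sqrt (Real.pi * ν) * (ν - 1) * Real.Gamma (ν / 2)) * (γ - 1 / γ)

/-- Centred two-piece Student t density (CTPT). -/
noncomputable def ctptDens (γ ν ε : ℝ) : ℝ :=
  2 / (γ + 1 / γ) *
    (if -(mMean γ ν) ≤ ε then tDens ν ((ε + mMean γ ν) / γ)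
     else tDens ν (γ * (ε + mMean γ ν)))

open Set

theorem integral_rpow_mul_one_sub_rpow {a b : ℝ} (ha : 0 < a) (hb : 0 < b) :
    ∫ x in (0 : ℝ)..1, x ^ (a - 1) * (1 - x) ^ (b - 1) =
      Gamma a * Gamma b / Gamma (a + b) := by
  have hcast : ((∫ x in (0 : ℝ)..1, x ^ (a - 1) * (1 - x) ^ (b - 1) : ℝ) : ℂ) =
      Complex.betaIntegral a b := by
    rw [Complex.betaIntegral, ← intervalIntegral.integral_ofReal]
    refine intervalIntegral.integral_congr fun x hx => ?_
    rw [uIcc_of_le zero_le_one] at hx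
    push_cast [Complex.ofReal_cpow hx.1, Complex.ofReal_cpow (sub_nonneg.2 hx.2)]
    rfl
  rw [← Complex.ofReal_inj, hcast,
    Complex.betaIntegral_eq_Gamma_mul_div _ _ (by simpa) (by simpa)]
  push_cast [← Complex.Gamma_ofReal]
  rfl

theorem image_div_one_sub_Ioo : (fun u : ℝ => u / (1 - u)) '' Ioo 0 1 = Ioi 0 := by
  ext y
  constructor
  · rintro ⟨u, ⟨hu0, hu1⟩, rfl⟩
    exact div_pos hu0 (sub_pos.2 hu1)
  · intro (hy : 0 < y)
    refine ⟨y / (1 + y), ⟨by positivity, (div_lt_one (by positivity)).2 (by linarith)⟩, ?_⟩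
    field_simp
    ring

theorem injOn_div_one_sub_Ioo : InjOn (fun u : ℝ => u / (1 - u)) (Ioo 0 1) := by
  rintro u ⟨-, hu1⟩ v ⟨-, hv1⟩ h
  have hu : 1 - u ≠ 0 := (sub_pos.2 hu1).ne'
  have hv : 1 - v ≠ 0 := (sub_pos.2 hv1).ne'
  simp only at h
  field_simp at h
  linarith

theorem integral_Ioi_rpow_mul_one_add_rpow_neg {a b : ℝ} (ha : 0 < a) (hb : 0 < b) :
    ∫ x in Ioi (0 : ℝ), x ^ (a - 1) * (1 + x) ^ (-(a + b)) =
      Gamma a * Gamma b / Gamma (a + b) := by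
  have hderiv : ∀ u ∈ Ioo (0 : ℝ) 1,
      HasDerivWithinAt (fun u : ℝ => u / (1 - u)) ((1 - u) ^ (-2 : ℝ)) (Ioo 0 1) u := by
    intro u ⟨_, hu1⟩
    have hu : 1 - u ≠ 0 := (sub_pos.2 hu1).ne'
    refine (((hasDerivAt_id u).div ((hasDerivAt_id u).const_sub 1) hu).congr_deriv ?_)
      |>.hasDerivWithinAt
    rw [rpow_neg (sub_pos.2 hu1).le, rpow_two]
    simp only [id_eq]
    field_simp
    ring
  rw [← image_div_one_sub_Ioo, integral_image_eq_integral_abs_deriv_smul measurableSet_Ioo hderiv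
    injOn_div_one_sub_Ioo, ← integral_rpow_mul_one_sub_rpow ha hb,
    intervalIntegral.integral_of_le zero_le_one, integral_Ioc_eq_integral_Ioo]
  refine setIntegral_congr_fun measurableSet_Ioo fun u ⟨hu0, hu1⟩ => ?_
  have hu : 0 < 1 - u := sub_pos.2 hu1
  have h1 : 1 + u / (1 - u) = (1 - u)⁻¹ := by field_simp; ring
  rw [smul_eq_mul, abs_of_pos (rpow_pos_of_pos hu _), h1, div_rpow hu0.le hu.le,
    inv_rpow hu.le, ← rpow_neg hu.le, neg_neg, div_eq_mul_inv, ← rpow_neg hu.le]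
  calc (1 - u) ^ (-2 : ℝ) * (u ^ (a - 1) * (1 - u) ^ (-(a - 1)) * (1 - u) ^ (a + b))
      = u ^ (a - 1) * ((1 - u) ^ (-2 : ℝ) * (1 - u) ^ (-(a - 1)) * (1 - u) ^ (a + b)) := by ring
    _ = u ^ (a - 1) * (1 - u) ^ (b - 1) := by
      rw [← rpow_add hu, ← rpow_add hu]
      ring_nf

theorem integral_Ioi_rpow_mul_one_add_sq_rpow_neg {a b : ℝ} (ha : 0 < a) (hb : 0 < b) :
    ∫ x in Ioi (0 : ℝ), x ^ (2 * a - 1) * (1 + x ^ 2) ^ (-(a + b)) =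
      Gamma a * Gamma b / (2 * Gamma (a + b)) := by
  have key := integral_comp_rpow_Ioi_of_pos
    (g := fun y : ℝ => y ^ (a - 1) * (1 + y) ^ (-(a + b))) two_pos
  rw [integral_Ioi_rpow_mul_one_add_rpow_neg ha hb] at key
  rw [div_mul_eq_div_div_swap, div_eq_inv_mul _ (2 : ℝ), ← key, ← integral_const_mul]
  refine setIntegral_congr_fun measurableSet_Ioi fun x (hx : 0 < x) => ?_
  rw [smul_eq_mul, rpow_two, ← rpow_natCast, ← rpow_mul hx.le, Nat.cast_ofNat]
  have hpow : x ^ ((2 : ℝ) - 1) * x ^ (2 * (a - 1)) = x ^ (2 * a - 1) := by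
    rw [← rpow_add hx]
    ring_nf
  rw [← hpow]
  ring

theorem integral_Ioi_pow_mul_comp_mul_left (g : ℝ → ℝ) (k : ℕ) {c : ℝ} (hc : 0 < c) :
    ∫ x in Ioi (0 : ℝ), x ^ k * g (c * x) =
      (c ^ (k + 1))⁻¹ * ∫ x in Ioi (0 : ℝ), x ^ k * g x := by
  have key := integral_comp_mul_left_Ioi (fun y => (y / c) ^ k * g y) 0 hc
  simp only [mul_zero, mul_div_cancel_left₀ _ hc.ne', smul_eq_mul, div_pow,
    div_mul_eq_mul_div, integral_div] at key
  rw [key]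
  field_simp
  ring

theorem integral_Iio_pow_mul_eq_integral_Ioi (g : ℝ → ℝ) (k : ℕ) :
    ∫ x in Iio (0 : ℝ), x ^ k * g x = (-1) ^ k * ∫ x in Ioi (0 : ℝ), x ^ k * g (-x) := by
  rw [← integral_Iic_eq_integral_Iio, ← neg_zero, ← integral_comp_neg_Ioi, neg_zero,
    ← integral_const_mul]
  refine setIntegral_congr_fun measurableSet_Ioi fun x _ => ?_
  rw [neg_pow, mul_assoc]

noncomputable def twoPiece (f : ℝ → ℝ) (γ y : ℝ) : ℝ :=
  if 0 ≤ y then f (y / γ) else f (γ * y)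

theorem integral_pow_mul_twoPiece {f : ℝ → ℝ} (hf_even : ∀ x, f (-x) = f x) {k : ℕ}
    (hf : Integrable (fun x => x ^ k * f x)) {γ : ℝ} (hγ : 0 < γ) :
    ∫ y, y ^ k * twoPiece f γ y =
      (γ ^ (k + 1) + (-1) ^ k * (γ ^ (k + 1))⁻¹) * ∫ x in Ioi (0 : ℝ), x ^ k * f x := by
  have hright : Integrable (fun y => y ^ k * f (γ⁻¹ * y)) := by
    refine ((hf.comp_mul_left' (inv_ne_zero hγ.ne')).const_mul (γ ^ k)).congr
      (ae_of_all _ fun y => ?_)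
    simp only [← mul_assoc, ← mul_pow, mul_inv_cancel_left₀ hγ.ne']
  have hleft : Integrable (fun y => y ^ k * f (γ * y)) := by
    refine ((hf.comp_mul_left' hγ.ne').const_mul (γ⁻¹ ^ k)).congr (ae_of_all _ fun y => ?_)
    simp only [← mul_assoc, ← mul_pow, inv_mul_cancel_left₀ hγ.ne']
  have hEqOn_right : EqOn (fun y => y ^ k * twoPiece f γ y)
      (fun y => y ^ k * f (γ⁻¹ * y)) (Ici 0) := fun y (hy : 0 ≤ y) => by
    simp only [twoPiece, if_pos hy, inv_mul_eq_div]
  have hEqOn_left : EqOn (fun y => y ^ k * twoPiece f γ y)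
      (fun y => y ^ k * f (γ * y)) (Iio 0) := fun y (hy : y < 0) => by
    simp only [twoPiece, if_neg (not_le.2 hy)]
  rw [← intervalIntegral.integral_Iio_add_Ici
      (hleft.integrableOn.congr_fun hEqOn_left.symm measurableSet_Iio)
      (hright.integrableOn.congr_fun hEqOn_right.symm measurableSet_Ici),
    setIntegral_congr_fun measurableSet_Iio hEqOn_left,
    setIntegral_congr_fun measurableSet_Ici hEqOn_right, integral_Ici_eq_integral_Ioi,
    integral_Iio_pow_mul_eq_integral_Ioi]
  simp only [mul_neg, hf_even]
  rw [integral_Ioi_pow_mul_comp_mul_left f k hγ,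
    integral_Ioi_pow_mul_comp_mul_left f k (inv_pos.2 hγ), inv_pow, inv_inv]
  ring

theorem integrable_pow_mul_one_add_sq_rpow_neg {k : ℕ} {p : ℝ} (hkp : (k : ℝ) + 1 < 2 * p) :
    Integrable (fun x : ℝ => x ^ k * (1 + x ^ 2) ^ (-p)) := by
  have hdom : Integrable (fun x : ℝ => (1 + ‖x‖ ^ 2) ^ (-(2 * p - k) / 2)) :=
    integrable_rpow_neg_one_add_norm_sq (by simp; linarith)
  refine hdom.mono' (by fun_prop) (ae_of_all _ fun x => ?_)
  have h1 : 0 < 1 + x ^ 2 := by positivity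
  have hxk : |x| ^ k ≤ (1 + x ^ 2) ^ ((k : ℝ) / 2) := by
    rw [rpow_div_two_eq_sqrt _ h1.le, rpow_natCast]
    gcongr
    exact abs_le_sqrt (by linarith)
  calc ‖x ^ k * (1 + x ^ 2) ^ (-p)‖ = |x| ^ k * (1 + x ^ 2) ^ (-p) := by
        rw [norm_mul, norm_pow, norm_eq_abs, norm_of_nonneg (rpow_nonneg h1.le _)]
    _ ≤ (1 + x ^ 2) ^ ((k : ℝ) / 2) * (1 + x ^ 2) ^ (-p) := by gcongr
    _ = (1 + ‖x‖ ^ 2) ^ (-(2 * p - k) / 2) := by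
        rw [← rpow_add h1, norm_eq_abs, sq_abs]
        ring_nf

theorem tDens_neg (ν x : ℝ) : tDens ν (-x) = tDens ν x := by
  simp only [tDens, neg_sq]

theorem tDens_sqrt_mul {ν : ℝ} (hν : 0 < ν) (t : ℝ) :
    tDens ν (√ν * t) = Gamma ((ν + 1) / 2) / (√(π * ν) * Gamma (ν / 2)) *
      (1 + t ^ 2) ^ (-((ν + 1) / 2)) := by
  rw [tDens, mul_pow, sq_sqrt hν.le, mul_div_cancel_left₀ _ hν.ne']

theorem integrable_pow_mul_tDens {ν : ℝ} {k : ℕ} (hk : (k : ℝ) < ν) :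
    Integrable (fun x => x ^ k * tDens ν x) := by
  have hν : 0 < ν := (Nat.cast_nonneg k).trans_lt hk
  have hs : √ν ≠ 0 := (sqrt_pos.2 hν).ne'
  refine (((integrable_pow_mul_one_add_sq_rpow_neg (p := (ν + 1) / 2) (k := k)
    (by linarith)).comp_div hs).const_mul (√ν ^ k * (Gamma ((ν + 1) / 2) /
      (√(π * ν) * Gamma (ν / 2))))).congr (ae_of_all _ fun x => ?_)
  have hx : x = √ν * (x / √ν) := (mul_div_cancel₀ x hs).symm
  simp only
  conv_rhs => rw [hx, tDens_sqrt_mul hν, mul_pow]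
  ring

theorem integral_Ioi_pow_mul_tDens {ν : ℝ} {k : ℕ} (hk : (k : ℝ) < ν) :
    ∫ x in Ioi (0 : ℝ), x ^ k * tDens ν x =
      ν ^ ((k : ℝ) / 2) / (2 * √π) *
        (Gamma (((k : ℝ) + 1) / 2) * Gamma ((ν - k) / 2) / Gamma (ν / 2)) := by
  have hν : 0 < ν := (Nat.cast_nonneg k).trans_lt hk
  have hs : 0 < √ν := sqrt_pos.2 hν
  have hkernel : ∫ x in Ioi (0 : ℝ), x ^ k * (1 + x ^ 2) ^ (-((ν + 1) / 2)) =
      Gamma (((k : ℝ) + 1) / 2) * Gamma ((ν - k) / 2) / (2 * Gamma ((ν + 1) / 2)) := by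
    have h := integral_Ioi_rpow_mul_one_add_sq_rpow_neg (a := ((k : ℝ) + 1) / 2)
      (b := (ν - k) / 2) (by positivity) (by linarith)
    rw [show ((k : ℝ) + 1) / 2 + (ν - k) / 2 = (ν + 1) / 2 by ring] at h
    rw [← h]
    refine setIntegral_congr_fun measurableSet_Ioi fun x _ => ?_
    rw [show 2 * (((k : ℝ) + 1) / 2) - 1 = k by ring, rpow_natCast]
  have hscaled := integral_Ioi_pow_mul_comp_mul_left (tDens ν) k hs
  simp only [tDens_sqrt_mul hν, mul_left_comm _ (Gamma _ / _), integral_const_mul,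
    hkernel] at hscaled
  rw [← mul_right_inj' (inv_ne_zero (pow_ne_zero (k + 1) hs.ne')), ← hscaled,
    sqrt_mul pi_pos.le, rpow_div_two_eq_sqrt _ hν.le, rpow_natCast]
  have := (Gamma_pos_of_pos (by linarith : 0 < (ν + 1) / 2)).ne'
  field_simp
  ring

theorem stmt6_general (γ ν : ℝ) (hγ : 0 < γ) (k : ℕ) (hk : (k : ℝ) < ν) :
    ∫ y : ℝ, y ^ k * tpDens γ ν y =
      2 / (γ + 1 / γ) * (γ ^ (k + 1) + (-1 : ℝ) ^ k * γ ^ (-(k : ℤ) - 1)) *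
        (ν ^ ((k : ℝ) / 2) / (2 * Real.sqrt Real.pi)) *
        (Real.Gamma (((k : ℝ) + 1) / 2) * Real.Gamma ((ν - k) / 2) /
          Real.Gamma (ν / 2)) := by
  have hzpow : γ ^ (-(k : ℤ) - 1) = (γ ^ (k + 1))⁻¹ := by
    rw [← zpow_natCast, ← zpow_neg]
    push_cast
    ring_nf
  have htp : ∀ y, tpDens γ ν y = 2 / (γ + 1 / γ) * twoPiece (tDens ν) γ y := fun _ => rfl
  simp only [htp, mul_left_comm (_ ^ k), integral_const_mul]
  rw [integral_pow_mul_twoPiece (tDens_neg ν) (integrable_pow_mul_tDens hk) hγ,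
    integral_Ioi_pow_mul_tDens hk, hzpow]
  ring

theorem stmt6 (γ ν : ℝ) (hγ : 0 < γ) (hν : 1 < ν) (k : ℕ) (hk : (k : ℝ) < ν) :
    ∫ y : ℝ, y ^ k * tpDens γ ν y =
      2 / (γ + 1 / γ) * (γ ^ (k + 1) + (-1 : ℝ) ^ k * γ ^ (-(k : ℤ) - 1)) *
        (ν ^ ((k : ℝ) / 2) / (2 * Real.sqrt Real.pi)) *
        (Real.Gamma (((k : ℝ) + 1) / 2) * Real.Gamma ((ν - k) / 2) /
          Real.Gamma (ν / 2)) :=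
  stmt6_general γ ν hγ k hk
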